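/- The softmax function σ: ℝ^γ → (0,1)^γ defined by σ(z)_j = e^{z_j} / Σ_{i=1}^γ e^{z_i} is 1-Lipschitz with respect to the Euclidean norm. -/

import Mathlib

/-- The softmax function on `ℝ^γ`. -/
noncomputable def softmax {γ : ℕ} (z : EuclideanSpace ℝ (Fin γ)) : EuclideanSpace ℝ (Fin γ) :=
  WithLp.toLp 2 (fun j => Real.exp (z j) / ∑ i, Real.exp (z i))

/-!
The Jacobian of softmax at `z` is `diag p - p pᵀ` with `p = softmax z`, which sends `v` to
`(p_j (v_j - ⟨p, v⟩))_j`. Since `0 ≤ p_j ≤ 1`, the square of that entry is at most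
`p_j (v_j - ⟨p, v⟩)²`, and these sum to the `p`-variance of `v`, which is at most
`∑ p_j v_j² ≤ ‖v‖²`. So the Jacobian has operator norm at most `1` everywhere, and the mean value
inequality gives the Lipschitz bound.
-/

open Matrix Finset

section

variable {ι : Type*} [Fintype ι] {p : ι → ℝ}

theorem sum_sq_mul_sub_dotProduct_le (hp0 : ∀ i, 0 ≤ p i) (hp1 : ∑ i, p i ≤ 1) (v : ι → ℝ) :
    ∑ j, (p j * (v j - p ⬝ᵥ v)) ^ 2 ≤ ∑ j, v j ^ 2 := by
  set m := p ⬝ᵥ v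
  have hp_le_one (j : ι) : p j ≤ 1 := (single_le_sum (fun i _ ↦ hp0 i) (mem_univ j)).trans hp1
  calc ∑ j, (p j * (v j - m)) ^ 2 ≤ ∑ j, p j * (v j - m) ^ 2 := by
        gcongr with j
        rw [mul_pow, sq (p j), mul_assoc]
        exact mul_le_of_le_one_left (mul_nonneg (hp0 j) (sq_nonneg _)) (hp_le_one j)
    _ = ∑ j, p j * v j ^ 2 - 2 * m * ∑ j, p j * v j + m ^ 2 * ∑ j, p j := by
        simp only [mul_sum, ← sum_sub_distrib, ← sum_add_distrib]
        exact sum_congr rfl fun j _ ↦ by ring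
    _ = ∑ j, p j * v j ^ 2 - m ^ 2 * (2 - ∑ j, p j) := by
        rw [show ∑ j, p j * v j = m from rfl]
        ring
    _ ≤ ∑ j, p j * v j ^ 2 := by nlinarith [mul_nonneg (sq_nonneg m) (sub_nonneg.2 hp1)]
    _ ≤ ∑ j, v j ^ 2 := by
        gcongr with j
        exact mul_le_of_le_one_left (sq_nonneg _) (hp_le_one j)

variable [DecidableEq ι]

theorem toEuclideanCLM_diagonal_sub_vecMulVec_apply (v : EuclideanSpace ℝ ι) (j : ι) :
    toEuclideanCLM (𝕜 := ℝ) (diagonal p - vecMulVec p p) v j = p j * (v j - p ⬝ᵥ v) := by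
  simp [ofLp_toEuclideanCLM, mulVec_diagonal, vecMulVec_mulVec, mul_sub]

theorem norm_toEuclideanCLM_diagonal_sub_vecMulVec_le_one (hp0 : ∀ i, 0 ≤ p i)
    (hp1 : ∑ i, p i ≤ 1) :
    ‖toEuclideanCLM (𝕜 := ℝ) (diagonal p - vecMulVec p p)‖ ≤ 1 := by
  refine ContinuousLinearMap.opNorm_le_bound _ zero_le_one fun v ↦ ?_
  rw [one_mul, ← sq_le_sq₀ (norm_nonneg _) (norm_nonneg _), EuclideanSpace.real_norm_sq_eq,
    EuclideanSpace.real_norm_sq_eq]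
  simpa only [toEuclideanCLM_diagonal_sub_vecMulVec_apply] using
    sum_sq_mul_sub_dotProduct_le hp0 hp1 v.ofLp

end

variable {γ : ℕ}

theorem softmax_nonneg (z : EuclideanSpace ℝ (Fin γ)) (i : Fin γ) : 0 ≤ softmax z i := by
  simp only [softmax]
  positivity

theorem sum_softmax [NeZero γ] (z : EuclideanSpace ℝ (Fin γ)) : ∑ i, softmax z i = 1 := by
  simp only [softmax, ← sum_div]
  exact div_self (sum_pos (fun i _ ↦ Real.exp_pos _) univ_nonempty).ne'

theorem hasStrictFDerivAt_softmax [NeZero γ] (z : EuclideanSpace ℝ (Fin γ)) :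
    HasStrictFDerivAt softmax
      (toEuclideanCLM (𝕜 := ℝ) (diagonal (softmax z) - vecMulVec (softmax z) (softmax z))) z := by
  have hS : 0 < ∑ i, Real.exp (z i) := sum_pos (fun i _ ↦ Real.exp_pos _) univ_nonempty
  have hexp (i : Fin γ) : HasStrictFDerivAt (fun x : EuclideanSpace ℝ (Fin γ) ↦ Real.exp (x i))
      (Real.exp (z i) • EuclideanSpace.proj i) z :=
    (EuclideanSpace.proj i).hasStrictFDerivAt.exp
  have hinv := (hasStrictDerivAt_inv hS.ne').comp_hasStrictFDerivAt z (.fun_sum fun i _ ↦ hexp i)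
  rw [hasStrictFDerivAt_euclidean]
  intro j
  refine ((hexp j).mul hinv).congr_fderiv (ContinuousLinearMap.ext fun v ↦ ?_)
  rw [ContinuousLinearMap.comp_apply, PiLp.proj_apply, toEuclideanCLM_diagonal_sub_vecMulVec_apply]
  simp only [neg_smul, smul_neg, Function.comp_apply, _root_.add_apply, _root_.neg_apply,
    _root_.smul_apply, _root_.sum_apply, PiLp.proj_apply, smul_eq_mul, softmax, dotProduct,
    div_mul_eq_mul_div, ← sum_div]
  field_simp
  ring

theorem lipschitzWith_one_softmax : LipschitzWith 1 (softmax (γ := γ)) := by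
  obtain _ | γ := γ
  · exact LipschitzWith.of_dist_le_mul fun x y ↦ by simp [Subsingleton.elim x y]
  · refine lipschitzWith_of_nnnorm_fderiv_le (𝕜 := ℝ)
      (fun z ↦ (hasStrictFDerivAt_softmax z).differentiableAt) fun z ↦ ?_
    rw [(hasStrictFDerivAt_softmax z).hasFDerivAt.fderiv, ← NNReal.coe_le_coe, coe_nnnorm]
    exact norm_toEuclideanCLM_diagonal_sub_vecMulVec_le_one (softmax_nonneg z) (sum_softmax z).le

/-- softmax is 1-Lipschitz with respect to the Euclidean norm. -/
theorem softmax_lipschitz (γ : ℕ) :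
    ∀ z w : EuclideanSpace ℝ (Fin γ), ‖softmax z - softmax w‖ ≤ 1 * ‖z - w‖ := by
  intro z w
  simpa using lipschitzWith_one_softmax.norm_sub_le z w
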